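/- Expected per-slot cost bounds for the online scheduling algorithm: when u is drawn uniformly from [0,1), for every slot t ∈ {1,…,T}: (i) the expected transmission cost of Alg. 2 in slot t satisfies E[C_{d(t)}] ≤ C_{k*_t} · x_{k*_t}(t); and (ii) for every user i, the expected age satisfies E[a_i(t)] ≤ Σ_{j=1}^t z_{i,j}(t), where x_{k*_t}(t) and z_{i,j}(t) are the final values computed by Alg. 1. -/

import Mathlib

open scoped Classical
open MeasureTheory

noncomputable section

/-- Age of information of user `i` under schedule `d`:
`a_i(0) = 0`, and `a_i(t) = 0` if `1_{i,d(t)}(t) = 1`, `a_i(t) = a_i(t-1) + 1` otherwise. -/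
def age (ind : ℕ → ℕ → ℕ → ℝ) (d : ℕ → ℕ) (i : ℕ) : ℕ → ℕ
  | 0 => 0
  | t + 1 => if ind i (d (t + 1)) (t + 1) = 1 then 0 else age ind d i t + 1

/-- Inner loop of Alg. 1 at a fixed slot: `innerLoop Ck θ ps j` is the value of the current
slot's `x`-variable after processing iterations `1, …, j`, where `ps j` is the (final)
contribution `Σ_{τ=j}^{t-1} x_{k*_τ}(τ)` of the earlier slots.  At iteration `j` the current
value of `Σ_{τ=j}^{t} x_{k*_τ}(τ)` is `ps j + innerLoop Ck θ ps (j-1)`; if it is `< 1`, the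
`x`-variable is increased by `(1/Ck) Σ_{τ=j}^{t} x_{k*_τ}(τ) + 1/(θ·Ck)`. -/
def innerLoop (Ck θ : ℝ) (ps : ℕ → ℝ) : ℕ → ℝ
  | 0 => 0
  | j + 1 =>
      if ps (j + 1) + innerLoop Ck θ ps j < 1 then
        innerLoop Ck θ ps j + (ps (j + 1) + innerLoop Ck θ ps j) / Ck + 1 / (θ * Ck)
      else innerLoop Ck θ ps j

/-- `xvec Ck θ t τ` : the value of `x_{k*_τ}(τ)` after Alg. 1 has processed slots `1, …, t`
(`Ck τ` stands for the cost `C_{k*_τ}` used in slot `τ`). -/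
def xvec (Ck : ℕ → ℝ) (θ : ℝ) : ℕ → ℕ → ℝ
  | 0, _ => 0
  | t + 1, τ =>
      if τ = t + 1 then
        innerLoop (Ck (t + 1)) θ (fun j => ∑ σ ∈ Finset.Ico j (t + 1), xvec Ck θ t σ) (t + 1)
      else xvec Ck θ t τ

/-- Final value of `x_{k*_t}(t)` computed by Alg. 1. -/
def xval (Ck : ℕ → ℝ) (θ : ℝ) (t : ℕ) : ℝ := xvec Ck θ t t

/-- `psFun Ck θ t j = Σ_{σ=j}^{t-1} x_{k*_σ}(σ)` (final values of the slots before `t`). -/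
def psFun (Ck : ℕ → ℝ) (θ : ℝ) (t : ℕ) (j : ℕ) : ℝ :=
  ∑ σ ∈ Finset.Ico j t, xvec Ck θ (t - 1) σ

/-- The update condition of Alg. 1 at iteration `j` of slot `t`: the current value of
`Σ_{τ=j}^{t} x_{k*_τ}(τ)` (earlier slots final, slot `t` after iterations `1,…,j-1`) is `< 1`. -/
def algCond (Ck : ℕ → ℝ) (θ : ℝ) (t j : ℕ) : Prop :=
  psFun Ck θ t j + innerLoop (Ck t) θ (psFun Ck θ t) (j - 1) < 1

/-- Final value of `z_{i,j}(t)` computed by Alg. 1 (it is the same for every user `i`). -/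
def zval (Ck : ℕ → ℝ) (θ : ℝ) (j t : ℕ) : ℝ :=
  if algCond Ck θ t j then
    1 - (psFun Ck θ t j + innerLoop (Ck t) θ (psFun Ck θ t) (j - 1))
  else 0

/-- Final value of `y_{i,j}(t)` computed by Alg. 1 (it is the same for every user `i`). -/
def yval (Ck : ℕ → ℝ) (θ : ℝ) (N : ℕ) (j t : ℕ) : ℝ :=
  if algCond Ck θ t j then 1 / N else 0

/-- `k*_t`: the minimum power level `k ≥ 1` with `1_{i,k}(t) = 1` for every user `i`. -/
def kstar (ind : ℕ → ℕ → ℕ → ℝ) (N : ℕ) (t : ℕ) : ℕ :=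
  sInf {k : ℕ | 1 ≤ k ∧ ∀ i ∈ Finset.Icc 1 N, ind i k t = 1}

/-- `X(t) = Σ_{τ=1}^t min{x_{k*_τ}(τ), 1}`, used by Alg. 2 (so `X(0) = 0`). -/
def bigX (Ck : ℕ → ℝ) (θ : ℝ) (t : ℕ) : ℝ :=
  ∑ τ ∈ Finset.Icc 1 t, min (xval Ck θ τ) 1

/-- Alg. 2 transmits in slot `t` for randomness `u` iff `u + k ∈ [X(t-1), X(t))` for some
integer `k ≥ 0`. -/
def transmits (Ck : ℕ → ℝ) (θ : ℝ) (u : ℝ) (t : ℕ) : Prop :=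
  ∃ k : ℕ, bigX Ck θ (t - 1) ≤ u + k ∧ u + k < bigX Ck θ t

/-- The decision of Alg. 2 in slot `t` for randomness `u`: transmit with power `k*_t`, or idle. -/
def dAlg (ind : ℕ → ℕ → ℕ → ℝ) (N : ℕ) (Ck : ℕ → ℝ) (θ : ℝ) (u : ℝ) (t : ℕ) : ℕ :=
  if transmits Ck θ u t then kstar ind N t else 0

/-- The constant `θ = (1 + 1/C_M)^⌊C_1⌋ − 1` of Alg. 1. -/
def thetaOf (C : ℕ → ℝ) (M : ℕ) : ℝ := (1 + 1 / C M) ^ ⌊C 1⌋ - 1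

/-! Alg. 2 is randomized rounding on the real line: slot `t` owns the interval `[X(t-1), X(t))`
of length `min(x_t, 1)` and transmits iff the lattice `u + ℤ` meets it. The set of such `u` is
`1`-periodic, so its measure in the fundamental domain `[0, 1)` equals its measure in
`[X(t-1), X(t-1) + 1)`, which is exactly that length; this gives (i). The age at `t` counts the
`j ≤ t` such that no slot of `[j, t]` transmits, i.e. such that `u + ℤ` misses
`[X(j-1), X(t))`. This has probability `1 - min(Σ_{τ=j}^t min(x_τ, 1), 1) ≤ (1 - Σ_{τ=j}^t x_τ)⁺`,
and Alg. 1 keeps `z_{i,j}(t)` above the latter because `x_t` only grows during the inner loop. -/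

open Finset

def periodizedIco (a b : ℝ) : Set ℝ := {u | ∃ k : ℤ, u + k ∈ Set.Ico a b}

section PeriodizedIco

variable {a b c : ℝ}

theorem measurableSet_periodizedIco (a b : ℝ) : MeasurableSet (periodizedIco a b) := by
  have : periodizedIco a b = ⋃ k : ℤ, (· + (k : ℝ)) ⁻¹' Set.Ico a b := by
    ext u; simp only [periodizedIco, Set.mem_iUnion, Set.mem_preimage]; rfl
  rw [this]
  exact .iUnion fun k => measurableSet_Ico.preimage (measurable_add_const _)

theorem periodic_mem_periodizedIco (a b : ℝ) : Function.Periodic (· ∈ periodizedIco a b) 1 := by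
  intro u
  refine propext ⟨fun ⟨k, hk⟩ => ⟨k + 1, ?_⟩, fun ⟨k, hk⟩ => ⟨k - 1, ?_⟩⟩
  · rwa [Int.cast_add, Int.cast_one, ← add_assoc, add_right_comm]
  · rwa [Int.cast_sub, Int.cast_one, add_add_sub_cancel]

theorem periodizedIco_eq_empty (hba : b ≤ a) : periodizedIco a b = ∅ :=
  Set.eq_empty_of_forall_notMem fun _ ⟨_, h1, h2⟩ => (h1.trans_lt h2).not_ge hba

theorem periodizedIco_union (hab : a ≤ b) (hbc : b ≤ c) :
    periodizedIco a b ∪ periodizedIco b c = periodizedIco a c := by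
  ext u
  simp only [periodizedIco, Set.mem_union, Set.mem_Ico]
  constructor
  · rintro (⟨k, h1, h2⟩ | ⟨k, h1, h2⟩)
    exacts [⟨k, h1, h2.trans_le hbc⟩, ⟨k, hab.trans h1, h2⟩]
  · rintro ⟨k, h1, h2⟩
    rcases lt_or_ge (u + k) b with h | h
    exacts [.inl ⟨k, h1, h⟩, .inr ⟨k, h, h2⟩]

theorem periodizedIco_inter_Ico_self :
    periodizedIco a b ∩ Set.Ico a (a + 1) = Set.Ico a (a + min (b - a) 1) := by
  have hend : a + min (b - a) 1 = min b (a + 1) := by rw [← min_add_add_left, add_sub_cancel]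
  ext u
  simp only [periodizedIco, Set.mem_inter_iff, Set.mem_Ico, hend, lt_min_iff]
  constructor
  · rintro ⟨⟨k, h1, h2⟩, hau, hu1⟩
    have hk : (0 : ℝ) ≤ k := by
      have : (-1 : ℤ) < k := by exact_mod_cast (show (-1 : ℝ) < k by linarith)
      exact_mod_cast (show (0 : ℤ) ≤ k by omega)
    exact ⟨hau, by linarith, by linarith⟩
  · rintro ⟨hau, hub, hu1⟩
    exact ⟨⟨0, by simp [hau], by simp; linarith⟩, hau, by linarith⟩

theorem volume_inter_Ico_of_periodic {A : Set ℝ} (hA : MeasurableSet A)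
    (hper : Function.Periodic (· ∈ A) 1) (s t : ℝ) :
    volume (A ∩ Set.Ico s (s + 1)) = volume (A ∩ Set.Ico t (t + 1)) := by
  -- Mathlib's fundamental domains of `ℤ` acting on `ℝ` are the `Ioc`s, a.e. equal to the `Ico`s.
  have hinv : ∀ g : AddSubgroup.zmultiples (1 : ℝ), (fun x => g +ᵥ x) ⁻¹' A = A := by
    rintro ⟨_, n, rfl⟩
    ext x
    simpa [add_comm] using (hper.int_mul n) x
  rw [measure_congr ((Filter.EventuallyEq.refl _ A).inter Ico_ae_eq_Ioc),
    measure_congr ((Filter.EventuallyEq.refl _ A).inter Ico_ae_eq_Ioc)]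
  exact (isAddFundamentalDomain_Ioc one_pos s).measure_set_eq
    (isAddFundamentalDomain_Ioc one_pos t) hA hinv

theorem measureReal_periodizedIco (hab : a ≤ b) :
    (volume.restrict (Set.Ico (0 : ℝ) 1)).real (periodizedIco a b) = min (b - a) 1 := by
  have hmin : 0 ≤ min (b - a) 1 := le_min (by linarith) zero_le_one
  have hshift := volume_inter_Ico_of_periodic (measurableSet_periodizedIco a b)
    (periodic_mem_periodizedIco a b) 0 a
  rw [zero_add] at hshift
  rw [measureReal_restrict_apply (measurableSet_periodizedIco a b), measureReal_def, hshift,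
    periodizedIco_inter_Ico_self, Real.volume_Ico, add_sub_cancel_left,
    ENNReal.toReal_ofReal hmin]

theorem mem_periodizedIco_iff_exists_mem_Ioc {X : ℕ → ℝ} (hX : Monotone X) {j t : ℕ}
    (hjt : j ≤ t) {u : ℝ} :
    u ∈ periodizedIco (X j) (X t) ↔ ∃ τ ∈ Ioc j t, u ∈ periodizedIco (X (τ - 1)) (X τ) := by
  induction t, hjt using Nat.le_induction with
  | base => simp [periodizedIco_eq_empty le_rfl]
  | succ t hjt ih =>
    rw [← periodizedIco_union (hX hjt) (hX t.le_succ), Set.mem_union, ih]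
    constructor
    · rintro (⟨τ, hτ, hu⟩ | hu)
      · exact ⟨τ, by grind, hu⟩
      · exact ⟨t + 1, by grind, hu⟩
    · rintro ⟨τ, hτ, hu⟩
      rcases (mem_Ioc.mp hτ).2.lt_or_eq with hτt | rfl
      · exact .inl ⟨τ, by grind, hu⟩
      · exact .inr hu

theorem mem_periodizedIco_iff_exists_nat {u : ℝ} (ha : 0 ≤ a) (hu : u ∈ Set.Ico 0 1) :
    u ∈ periodizedIco a b ↔ ∃ k : ℕ, a ≤ u + k ∧ u + k < b := by
  constructor
  · rintro ⟨k, hak, hkb⟩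
    have hk : (-1 : ℤ) < k := by exact_mod_cast (show (-1 : ℝ) < k by linarith [hu.2])
    lift k to ℕ using (by omega)
    exact ⟨k, by exact_mod_cast hak, by exact_mod_cast hkb⟩
  · rintro ⟨k, hk⟩
    exact ⟨k, by exact_mod_cast hk⟩

end PeriodizedIco

section InnerLoop

variable {c θ : ℝ} {ps : ℕ → ℝ}

theorem innerLoop_nonneg (hc : 0 ≤ c) (hθ : 0 ≤ θ) (hps : ∀ j, 0 ≤ ps j) (j : ℕ) :
    0 ≤ innerLoop c θ ps j := by
  induction j with
  | zero => exact le_rfl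
  | succ j ih =>
    rw [innerLoop]
    split_ifs
    · have := hps (j + 1)
      positivity
    · exact ih

theorem innerLoop_mono (hc : 0 ≤ c) (hθ : 0 ≤ θ) (hps : ∀ j, 0 ≤ ps j) :
    Monotone (innerLoop c θ ps) := by
  refine monotone_nat_of_le_succ fun j => ?_
  conv_rhs => rw [innerLoop]
  split_ifs
  · have := hps (j + 1)
    have := innerLoop_nonneg hc hθ hps j
    have : 0 ≤ (ps (j + 1) + innerLoop c θ ps j) / c + 1 / (θ * c) := by positivity
    linarith
  · exact le_rfl

end InnerLoop

section PrimalDual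

variable {Ck : ℕ → ℝ} {θ : ℝ}

theorem xvec_nonneg (hC : ∀ τ, 0 ≤ Ck τ) (hθ : 0 ≤ θ) (t τ : ℕ) : 0 ≤ xvec Ck θ t τ := by
  induction t generalizing τ with
  | zero => exact le_rfl
  | succ t ih =>
    rw [xvec]
    split_ifs
    · exact innerLoop_nonneg (hC _) hθ (fun j => sum_nonneg fun σ _ => ih σ) _
    · exact ih τ

theorem xval_nonneg (hC : ∀ τ, 0 ≤ Ck τ) (hθ : 0 ≤ θ) (t : ℕ) : 0 ≤ xval Ck θ t :=
  xvec_nonneg hC hθ t t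

theorem xval_eq_innerLoop (t : ℕ) : xval Ck θ t = innerLoop (Ck t) θ (psFun Ck θ t) t := by
  cases t with
  | zero => rfl
  | succ t => rw [xval, xvec, if_pos rfl]; rfl

theorem xvec_eq_xval {t τ : ℕ} (hτ : τ ≤ t) : xvec Ck θ t τ = xval Ck θ τ := by
  induction t with
  | zero => rw [Nat.le_zero.mp hτ]; rfl
  | succ t ih =>
    rw [xvec]
    split_ifs with h
    · subst h; rw [xval_eq_innerLoop]; rfl
    · exact ih (by omega)

theorem psFun_eq_sum_xval (t j : ℕ) : psFun Ck θ t j = ∑ σ ∈ Ico j t, xval Ck θ σ :=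
  sum_congr rfl fun σ hσ => xvec_eq_xval (by grind)


theorem zval_nonneg (j t : ℕ) : 0 ≤ zval Ck θ j t := by
  unfold zval algCond
  split_ifs with h <;> linarith

theorem one_sub_sum_xval_le_zval (hC : ∀ τ, 0 ≤ Ck τ) (hθ : 0 ≤ θ) {j t : ℕ} (hjt : j ≤ t) :
    1 - ∑ τ ∈ Icc j t, xval Ck θ τ ≤ zval Ck θ j t := by
  have hsplit : ∑ τ ∈ Icc j t, xval Ck θ τ = psFun Ck θ t j + xval Ck θ t := by
    rw [← Ico_insert_right hjt, sum_insert right_notMem_Ico, psFun_eq_sum_xval, add_comm]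
  have hloop : innerLoop (Ck t) θ (psFun Ck θ t) (j - 1) ≤ xval Ck θ t := by
    rw [xval_eq_innerLoop]
    exact innerLoop_mono (hC t) hθ (fun j => sum_nonneg fun σ _ => xvec_nonneg hC hθ _ σ)
      (by omega)
  unfold zval algCond
  split_ifs with h <;> linarith

theorem min_sum_le_min_sum_min {ι : Type*} {s : Finset ι} {f : ι → ℝ} (hf : ∀ i ∈ s, 0 ≤ f i) :
    min (∑ i ∈ s, f i) 1 ≤ min (∑ i ∈ s, min (f i) 1) 1 := by
  by_cases h : ∀ i ∈ s, f i ≤ 1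
  · rw [sum_congr rfl fun i hi => min_eq_left (h i hi)]
  · push Not at h
    obtain ⟨i, hi, hfi⟩ := h
    have : 1 ≤ ∑ i ∈ s, min (f i) 1 := by
      calc (1 : ℝ) = min (f i) 1 := (min_eq_right hfi.le).symm
        _ ≤ _ := single_le_sum (fun j hj => le_min (hf j hj) zero_le_one) hi
    rw [min_eq_right this]
    exact min_le_right _ _

theorem one_sub_min_le_zval (hC : ∀ τ, 0 ≤ Ck τ) (hθ : 0 ≤ θ) {j t : ℕ} (hjt : j ≤ t) :
    1 - min (∑ τ ∈ Icc j t, min (xval Ck θ τ) 1) 1 ≤ zval Ck θ j t := by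
  have hsum := one_sub_sum_xval_le_zval hC hθ hjt
  have hmin := min_sum_le_min_sum_min fun τ (_ : τ ∈ Icc j t) => xval_nonneg hC hθ τ
  have := zval_nonneg (Ck := Ck) (θ := θ) j t
  rcases min_cases (∑ τ ∈ Icc j t, xval Ck θ τ) 1 with ⟨h, -⟩ | ⟨h, -⟩ <;> linarith

end PrimalDual

section Rounding

variable {Ck : ℕ → ℝ} {θ : ℝ}

theorem bigX_sub_bigX {j t : ℕ} (hjt : j ≤ t) :
    bigX Ck θ t - bigX Ck θ j = ∑ τ ∈ Ioc j t, min (xval Ck θ τ) 1 := by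
  have hIcc (n : ℕ) : Icc 1 n = Ioc 0 n := Icc_add_one_left_eq_Ioc 0 n
  simp only [bigX, hIcc]
  rw [sub_eq_iff_eq_add', sum_Ioc_consecutive _ (Nat.zero_le j) hjt]

theorem bigX_mono (hC : ∀ τ, 0 ≤ Ck τ) (hθ : 0 ≤ θ) : Monotone (bigX Ck θ) :=
  monotone_nat_of_le_succ fun t => by
    have := bigX_sub_bigX (Ck := Ck) (θ := θ) t.le_succ
    have := sum_nonneg fun τ (_ : τ ∈ Ioc t (t + 1)) => le_min (xval_nonneg hC hθ τ) zero_le_one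
    linarith

theorem bigX_nonneg (hC : ∀ τ, 0 ≤ Ck τ) (hθ : 0 ≤ θ) (t : ℕ) : 0 ≤ bigX Ck θ t :=
  (bigX_mono hC hθ (Nat.zero_le t)).trans_eq' (by simp [bigX])

theorem transmits_iff_mem_periodizedIco (hC : ∀ τ, 0 ≤ Ck τ) (hθ : 0 ≤ θ) {u : ℝ}
    (hu : u ∈ Set.Ico 0 1) (t : ℕ) :
    transmits Ck θ u t ↔ u ∈ periodizedIco (bigX Ck θ (t - 1)) (bigX Ck θ t) :=
  (mem_periodizedIco_iff_exists_nat (bigX_nonneg hC hθ _) hu).symm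

end Rounding

theorem age_eq_card (ind : ℕ → ℕ → ℕ → ℝ) (d : ℕ → ℕ) (i t : ℕ) :
    age ind d i t = #{j ∈ Icc 1 t | ∀ τ ∈ Icc j t, ind i (d τ) τ ≠ 1} := by
  induction t with
  | zero => simp [age]
  | succ t ih =>
    rw [age]
    split_ifs with h
    · refine (card_eq_zero.mpr (filter_eq_empty_iff.mpr fun j hj hno => ?_)).symm
      exact hno (t + 1) (by grind) h
    · have hstep : {j ∈ Icc 1 (t + 1) | ∀ τ ∈ Icc j (t + 1), ind i (d τ) τ ≠ 1}
          = insert (t + 1) {j ∈ Icc 1 t | ∀ τ ∈ Icc j t, ind i (d τ) τ ≠ 1} := by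
        ext j
        simp only [mem_filter, mem_insert, mem_Icc]
        constructor
        · rintro ⟨hj, hno⟩
          rcases hj.2.lt_or_eq with hjt | rfl
          · exact .inr ⟨⟨hj.1, by omega⟩, fun τ hτ => hno τ ⟨hτ.1, by omega⟩⟩
          · exact .inl rfl
        · rintro (rfl | ⟨hj, hno⟩)
          · exact ⟨⟨by omega, le_rfl⟩, fun τ hτ => (by omega : τ = t + 1) ▸ h⟩
          · refine ⟨⟨hj.1, by omega⟩, fun τ hτ => ?_⟩
            rcases hτ.2.lt_or_eq with hτt | rfl
            exacts [hno τ ⟨hτ.1, by omega⟩, h]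
      rw [ih, hstep, card_insert_of_notMem (by simp)]

section Kstar

variable {ind : ℕ → ℕ → ℕ → ℝ} {N M : ℕ}

theorem kstar_mem (hM : 1 ≤ M) (hcov : ∀ i t, ind i M t = 1) (t : ℕ) :
    kstar ind N t ∈ {k : ℕ | 1 ≤ k ∧ ∀ i ∈ Icc 1 N, ind i k t = 1} :=
  Nat.sInf_mem ⟨M, hM, fun i _ => hcov i t⟩

theorem kstar_le (hM : 1 ≤ M) (hcov : ∀ i t, ind i M t = 1) (t : ℕ) : kstar ind N t ≤ M :=
  Nat.sInf_le ⟨hM, fun i _ => hcov i t⟩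

end Kstar

theorem thetaOf_nonneg {C : ℕ → ℝ} {M : ℕ} (hC1 : 0 ≤ C 1) (hCM : 0 ≤ C M) : 0 ≤ thetaOf C M := by
  have hbase : 1 ≤ 1 + 1 / C M := le_add_of_nonneg_right (by positivity)
  exact sub_nonneg.mpr (one_le_zpow₀ hbase (Int.floor_nonneg.mpr hC1))

instance : IsProbabilityMeasure (volume.restrict (Set.Ico (0 : ℝ) 1)) :=
  ⟨by rw [Measure.restrict_apply_univ, Real.volume_Ico]; norm_num⟩

section Expectation

variable {ind : ℕ → ℕ → ℕ → ℝ} {N : ℕ} {Ck : ℕ → ℝ} {θ : ℝ}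

theorem setIntegral_cost_dAlg (hC : ∀ τ, 0 ≤ Ck τ) (hθ : 0 ≤ θ) {C : ℕ → ℝ} (hC0 : C 0 = 0)
    {t : ℕ} (ht : 1 ≤ t) :
    ∫ u in Set.Ico (0 : ℝ) 1, C (dAlg ind N Ck θ u t)
      = C (kstar ind N t) * min (xval Ck θ t) 1 := by
  have hcost : Set.EqOn (fun u => C (dAlg ind N Ck θ u t))
      ((periodizedIco (bigX Ck θ (t - 1)) (bigX Ck θ t)).indicator fun _ => C (kstar ind N t))
      (Set.Ico 0 1) := by
    intro u hu
    simp only [dAlg, Set.indicator, ← transmits_iff_mem_periodizedIco hC hθ hu]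
    split_ifs <;> simp [hC0]
  have hX := bigX_sub_bigX (Ck := Ck) (θ := θ) (Nat.sub_le t 1)
  rw [show Ioc (t - 1) t = {t} by ext; simp; omega, sum_singleton] at hX
  rw [setIntegral_congr_fun measurableSet_Ico hcost,
    integral_indicator_const _ (measurableSet_periodizedIco _ _),
    measureReal_periodizedIco (bigX_mono hC hθ (Nat.sub_le t 1)), hX,
    min_eq_left (min_le_right _ _), smul_eq_mul, mul_comm]

theorem ind_dAlg_eq_one_iff {i : ℕ} (hzero : ∀ τ, ind i 0 τ = 0)
    (hker : ∀ τ, ind i (kstar ind N τ) τ = 1) (u : ℝ) (τ : ℕ) :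
    ind i (dAlg ind N Ck θ u τ) τ = 1 ↔ transmits Ck θ u τ := by
  unfold dAlg
  split_ifs with h <;> simp [h, hker, hzero]

theorem setIntegral_age_dAlg (hC : ∀ τ, 0 ≤ Ck τ) (hθ : 0 ≤ θ) {i : ℕ}
    (hzero : ∀ τ, ind i 0 τ = 0) (hker : ∀ τ, ind i (kstar ind N τ) τ = 1) (t : ℕ) :
    ∫ u in Set.Ico (0 : ℝ) 1, (age ind (dAlg ind N Ck θ u) i t : ℝ)
      = ∑ j ∈ Icc 1 t, (1 - min (bigX Ck θ t - bigX Ck θ (j - 1)) 1) := by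
  have hage : Set.EqOn (fun u => (age ind (dAlg ind N Ck θ u) i t : ℝ))
      (fun u => ∑ j ∈ Icc 1 t,
        (periodizedIco (bigX Ck θ (j - 1)) (bigX Ck θ t))ᶜ.indicator 1 u) (Set.Ico 0 1) := by
    intro u hu
    simp only [age_eq_card, natCast_card_filter]
    refine sum_congr rfl fun j hj => ?_
    have hidle : (∀ τ ∈ Icc j t, ind i (dAlg ind N Ck θ u τ) τ ≠ 1)
        ↔ u ∈ (periodizedIco (bigX Ck θ (j - 1)) (bigX Ck θ t))ᶜ := by
      rw [Set.mem_compl_iff,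
        mem_periodizedIco_iff_exists_mem_Ioc (bigX_mono hC hθ) (by grind)]
      simp only [ne_eq, ind_dAlg_eq_one_iff hzero hker, ← transmits_iff_mem_periodizedIco hC hθ hu,
        mem_Icc, mem_Ioc, not_exists, not_and]
      have hj1 := (mem_Icc.mp hj).1
      exact forall_congr' fun τ => imp_congr_left (by omega)
    simp only [Set.indicator, hidle, Pi.one_apply]
  rw [setIntegral_congr_fun measurableSet_Ico hage,
    integral_finsetSum _ fun j _ => (integrable_const 1).indicator
      (measurableSet_periodizedIco _ _).compl]
  refine sum_congr rfl fun j hj => ?_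
  rw [integral_indicator_one (measurableSet_periodizedIco _ _).compl,
    probReal_compl_eq_one_sub (measurableSet_periodizedIco _ _),
    measureReal_periodizedIco (bigX_mono hC hθ (by grind))]

end Expectation

theorem stmt12_general (N M T : ℕ) (hM : 1 ≤ M)
    (ind : ℕ → ℕ → ℕ → ℝ)
    (hcov : ∀ i t, ind i M t = 1)
    (hzero : ∀ i t, ind i 0 t = 0)
    (C : ℕ → ℝ) (hC0 : C 0 = 0) (hC1 : 1 ≤ C 1)
    (hCmono : ∀ k k', 1 ≤ k → k ≤ k' → k' ≤ M → C k ≤ C k') :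
    ∀ t ∈ Finset.Icc 1 T,
      (∫ u in Set.Ico (0 : ℝ) 1,
          C (dAlg ind N (fun τ => C (kstar ind N τ)) (thetaOf C M) u t))
        ≤ C (kstar ind N t) * xval (fun τ => C (kstar ind N τ)) (thetaOf C M) t ∧
      ∀ i ∈ Finset.Icc 1 N,
        (∫ u in Set.Ico (0 : ℝ) 1,
            (age ind (dAlg ind N (fun τ => C (kstar ind N τ)) (thetaOf C M) u) i t : ℝ))
          ≤ ∑ j ∈ Finset.Icc 1 t, zval (fun τ => C (kstar ind N τ)) (thetaOf C M) j t := by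
  intro t ht
  have hC1_nonneg : 0 ≤ C 1 := zero_le_one.trans hC1
  have hC : ∀ τ, 0 ≤ C (kstar ind N τ) := fun τ =>
    hC1_nonneg.trans (hCmono 1 _ le_rfl (kstar_mem hM hcov τ).1 (kstar_le hM hcov τ))
  have hθ : 0 ≤ thetaOf C M := thetaOf_nonneg hC1_nonneg (hC1_nonneg.trans (hCmono 1 M le_rfl hM le_rfl))
  refine ⟨?_, fun i hi => ?_⟩
  · rw [setIntegral_cost_dAlg hC hθ hC0 (mem_Icc.mp ht).1]
    exact mul_le_mul_of_nonneg_left (min_le_left _ _) (hC t)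
  · rw [setIntegral_age_dAlg hC hθ (hzero i) (fun τ => (kstar_mem hM hcov τ).2 i hi)]
    refine sum_le_sum fun j hj => ?_
    rw [bigX_sub_bigX (by grind), show Ioc (j - 1) t = Icc j t by ext; simp; grind]
    exact one_sub_min_le_zval hC hθ (mem_Icc.mp hj).2

/-- expected per-slot cost bounds for Alg. 2: when `u` is drawn uniformly from
`[0,1)`, for every slot `t ∈ {1,…,T}`, (i) `E[C_{d(t)}] ≤ C_{k*_t} · x_{k*_t}(t)` and
(ii) `E[a_i(t)] ≤ Σ_{j=1}^t z_{i,j}(t)` for every user `i`, where `x_{k*_t}(t)` and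
`z_{i,j}(t)` are the final values computed by Alg. 1. -/
theorem stmt12 (N M T : ℕ) (hN : 1 ≤ N) (hM : 1 ≤ M) (hT : 1 ≤ T)
    (ind : ℕ → ℕ → ℕ → ℝ)
    (hind01 : ∀ i k t, ind i k t = 0 ∨ ind i k t = 1)
    (hmono : ∀ i k k' t, k ≤ k' → ind i k t = 1 → ind i k' t = 1)
    (hcov : ∀ i t, ind i M t = 1)
    (hzero : ∀ i t, ind i 0 t = 0)
    (C : ℕ → ℝ) (hC0 : C 0 = 0) (hC1 : 1 ≤ C 1)
    (hCmono : ∀ k k', 1 ≤ k → k ≤ k' → k' ≤ M → C k ≤ C k') :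
    ∀ t ∈ Finset.Icc 1 T,
      (∫ u in Set.Ico (0 : ℝ) 1,
          C (dAlg ind N (fun τ => C (kstar ind N τ)) (thetaOf C M) u t))
        ≤ C (kstar ind N t) * xval (fun τ => C (kstar ind N τ)) (thetaOf C M) t ∧
      ∀ i ∈ Finset.Icc 1 N,
        (∫ u in Set.Ico (0 : ℝ) 1,
            (age ind (dAlg ind N (fun τ => C (kstar ind N τ)) (thetaOf C M) u) i t : ℝ))
          ≤ ∑ j ∈ Finset.Icc 1 t, zval (fun τ => C (kstar ind N τ)) (thetaOf C M) j t :=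
  stmt12_general N M T hM ind hcov hzero C hC0 hC1 hCmono

end
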